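/- arXiv:0906.1093 — 5 statements merged into one kernel-verified Lean document; each statement's English description precedes it below -/
import Mathlib

section
/- Let u ∈ H¹(0, L) with u not identically zero, satisfying u(x₀) = 0 for some x₀ ∈ [0, L] attaining max u + min u = 0 (i.e. u ∈ X₁ \ {0} where X₁ = {v ∈ H¹(0,L) : max v + min v = 0}). Then ∫₀ᴸ u′(x)² dx ≥ (4/L)·‖u‖∞², i.e. the minimum of I₁(v) = (∫₀ᴸ v′²)/‖v‖∞² over X₁ \ {0} equals 4/L. -/
/-! If `a` and `b` are points where `u` attains its maximum `M` and its minimum `-M`, then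
Cauchy–Schwarz on the segment between them gives
`(2M)² = (u b - u a)² ≤ |b - a| ∫ u'² ≤ L ∫ u'²`.
The balance condition `max u + min u = 0` also makes `M` the supremum of `|u|`. -/

open Set intervalIntegral MeasureTheory

theorem sq_integral_le_mul_integral_sq {f : ℝ → ℝ} {a b : ℝ} (hab : a ≤ b)
    (hf : IntervalIntegrable f volume a b)
    (hf2 : IntervalIntegrable (fun x => f x ^ 2) volume a b) :
    (∫ x in a..b, f x) ^ 2 ≤ (b - a) * ∫ x in a..b, f x ^ 2 := by
  -- `t ↦ ∫ (t - f)²` is a nonnegative quadratic polynomial, so its discriminant is `≤ 0`.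
  have hquad : ∀ t : ℝ,
      0 ≤ (b - a) * (t * t) + (-2 * ∫ x in a..b, f x) * t + ∫ x in a..b, f x ^ 2 := by
    intro t
    have hexpand : ∫ x in a..b, (t - f x) ^ 2 =
        (b - a) * (t * t) + (-2 * ∫ x in a..b, f x) * t + ∫ x in a..b, f x ^ 2 := by
      have hlin : IntervalIntegrable (fun x => t ^ 2 - 2 * t * f x) volume a b :=
        intervalIntegrable_const.sub (hf.const_mul _)
      simp_rw [sub_sq, integral_add hlin hf2, integral_sub intervalIntegrable_const
        (hf.const_mul _), intervalIntegral.integral_const_mul, intervalIntegral.integral_const,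
        smul_eq_mul]
      ring
    exact hexpand ▸ integral_nonneg hab fun x _ => sq_nonneg _
  have := discrim_le_zero hquad
  rw [discrim] at this
  linarith

theorem sq_sub_le_mul_integral_deriv_sq {u : ℝ → ℝ} (hu : ContDiff ℝ 1 u) {a b : ℝ}
    (hab : a ≤ b) : (u b - u a) ^ 2 ≤ (b - a) * ∫ x in a..b, deriv u x ^ 2 := by
  have hu' : Continuous (deriv u) := hu.continuous_deriv le_rfl
  rw [← integral_deriv_eq_sub (fun x _ => hu.differentiable one_ne_zero x)
    (hu'.intervalIntegrable a b)]
  exact sq_integral_le_mul_integral_sq hab (hu'.intervalIntegrable a b)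
    ((hu'.pow 2).intervalIntegrable a b)

theorem sq_sub_le_mul_integral_deriv_sq_of_mem_Icc {u : ℝ → ℝ} (hu : ContDiff ℝ 1 u)
    {a b c d : ℝ} (ha : a ∈ Icc c d) (hb : b ∈ Icc c d) :
    (u b - u a) ^ 2 ≤ (d - c) * ∫ x in c..d, deriv u x ^ 2 := by
  wlog hab : a ≤ b generalizing a b
  · exact sub_sq_comm (u b) (u a) ▸ this hb ha (le_of_not_ge hab)
  calc (u b - u a) ^ 2 ≤ (b - a) * ∫ x in a..b, deriv u x ^ 2 :=
        sq_sub_le_mul_integral_deriv_sq hu hab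
    _ ≤ (d - c) * ∫ x in c..d, deriv u x ^ 2 := by
        have hmono : ∫ x in a..b, deriv u x ^ 2 ≤ ∫ x in c..d, deriv u x ^ 2 :=
          integral_mono_interval ha.1 hab hb.2 (.of_forall fun x => sq_nonneg _)
            (((hu.continuous_deriv le_rfl).pow 2).intervalIntegrable c d)
        exact mul_le_mul (by linarith [ha.1, hb.2]) hmono
          (integral_nonneg hab fun x _ => sq_nonneg _) (by linarith [ha.1, hb.2])

theorem sSup_abs_image_eq_sSup_image_of_sSup_add_sInf_eq_zero {α : Type*} {u : α → ℝ}
    {s : Set α} (hs : s.Nonempty) (hbdd : BddAbove (u '' s)) (hbdd' : BddBelow (u '' s))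
    (hbal : sSup (u '' s) + sInf (u '' s) = 0) :
    sSup ((fun x => |u x|) '' s) = sSup (u '' s) := by
  have habs_le : ∀ x ∈ s, |u x| ≤ sSup (u '' s) := fun x hx =>
    abs_le.2 ⟨by linarith [csInf_le hbdd' (mem_image_of_mem u hx)],
      le_csSup hbdd (mem_image_of_mem u hx)⟩
  refine le_antisymm (csSup_le (hs.image _) (forall_mem_image.2 habs_le))
    (csSup_le (hs.image _) (forall_mem_image.2 fun x hx => ?_))
  exact (le_abs_self _).trans
    (le_csSup ⟨_, forall_mem_image.2 habs_le⟩ (mem_image_of_mem (fun x => |u x|) hx))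

theorem L1_lyapunov_minimization_general (L : ℝ) (hL : 0 < L) (u : ℝ → ℝ)
    (hu : ContDiff ℝ 1 u)
    (hX1 : sSup (u '' Icc 0 L) + sInf (u '' Icc 0 L) = 0) :
    (4 / L) * (sSup ((fun x => |u x|) '' Icc 0 L)) ^ 2 ≤
      ∫ x in (0:ℝ)..L, (deriv u x) ^ 2 := by
  have hIcc : (Icc (0:ℝ) L).Nonempty := nonempty_Icc.2 hL.le
  have himage : IsCompact (u '' Icc 0 L) :=
    isCompact_Icc.image_of_continuousOn hu.continuous.continuousOn
  obtain ⟨a, ha, hmax⟩ := isCompact_Icc.exists_sSup_image_eq hIcc hu.continuous.continuousOn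
  obtain ⟨b, hb, hmin⟩ := isCompact_Icc.exists_sInf_image_eq hIcc hu.continuous.continuousOn
  rw [sSup_abs_image_eq_sSup_image_of_sSup_add_sInf_eq_zero hIcc himage.bddAbove
    himage.bddBelow hX1]
  have hosc := sq_sub_le_mul_integral_deriv_sq_of_mem_Icc hu hb ha
  rw [← hmax, ← hmin, sub_zero, eq_neg_of_add_eq_zero_right hX1] at hosc
  rw [div_mul_eq_mul_div, div_le_iff₀ hL]
  linarith

theorem L1_lyapunov_minimization (L : ℝ) (hL : 0 < L) (u : ℝ → ℝ)
    (hu : ContDiff ℝ 1 u)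
    (hX1 : sSup (u '' Icc 0 L) + sInf (u '' Icc 0 L) = 0)
    (hne : ∃ x ∈ Icc 0 L, u x ≠ 0) :
    (4 / L) * (sSup ((fun x => |u x|) '' Icc 0 L)) ^ 2 ≤
      ∫ x in (0:ℝ)..L, (deriv u x) ^ 2 :=
  L1_lyapunov_minimization_general L hL u hu hX1
end

section
/- Let a ∈ C[0,L] with a not identically zero, ∫₀ᴸ a(x) dx ≥ 0, and ∫₀ᴸ a⁺(x) dx < 4/L, where a⁺(x) = max{a(x), 0}. If u ∈ C²[0,L] satisfies u''(x) + a(x)u(x) = 0 on (0,L) with u'(0) = u'(L) = 0, then u ≡ 0. -/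
open Set intervalIntegral

/-!
If `u` changes sign, let `b` and `b'` be a maximum and a minimum point of `u`; there `u' = 0`,
by Fermat's rule inside `(0, L)` and by the boundary condition at the endpoints. On an arc from
`b` to an adjacent zero `c` of `u` we have `0 ≤ u ≤ u b`, hence `u'' = -a u ≥ -u(b) a⁺`;
integrating twice gives `1 ≤ |c - b| ∫ a⁺` over the arc. The two disjoint arcs around `b` and
`b'` have total length `p + q ≤ L`, and `1/p + 1/q ≥ 4/(p + q)` yields `∫₀ᴸ a⁺ ≥ 4/L`.

If `u ≥ 0` (or `u ≤ 0`) vanishes somewhere, that zero is an extremum, so `u'` vanishes there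
too and `u ≡ 0` by uniqueness for the linear ODE. If `u` has no zero, `v = u'/u` satisfies
`v' = -a - v²` and `v(0) = v(L) = 0`, so `∫ v² = -∫ a ≤ 0`; thus `v ≡ 0` and `a = -v' ≡ 0`.
-/

theorem ContinuousOn.exists_zero_nonneg_on_Icc_left {f : ℝ → ℝ} {p q : ℝ}
    (hf : ContinuousOn f (Icc p q)) (hpq : p ≤ q) (hp : 0 ≤ f p) (hq : f q ≤ 0) :
    ∃ c ∈ Icc p q, f c = 0 ∧ ∀ x ∈ Icc p c, 0 ≤ f x := by
  set S := Icc p q ∩ f ⁻¹' Iic 0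
  have hqS : q ∈ S := ⟨right_mem_Icc.2 hpq, hq⟩
  have hbdd : BddBelow S := bddBelow_Icc.mono inter_subset_left
  have hcS : sInf S ∈ S :=
    (hf.preimage_isClosed_of_isClosed isClosed_Icc isClosed_Iic).csInf_mem ⟨q, hqS⟩ hbdd
  have hpos : ∀ x ∈ Icc p (sInf S), x < sInf S → 0 < f x := fun x hx hlt =>
    not_le.1 fun hfx => (csInf_le hbdd ⟨⟨hx.1, hlt.le.trans hcS.1.2⟩, hfx⟩).not_gt hlt
  have hc0 : f (sInf S) = 0 := by
    refine le_antisymm hcS.2 (not_lt.1 fun hneg => ?_)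
    obtain ⟨y, hy, hy0⟩ := intermediate_value_Icc' hcS.1.1 (hf.mono (Icc_subset_Icc_right hcS.1.2))
      ⟨hneg.le, hp⟩
    rcases hy.2.lt_or_eq with hlt | rfl
    · exact (hpos y hy hlt).ne' hy0
    · exact hneg.ne hy0
  refine ⟨sInf S, hcS.1, hc0, fun x hx => ?_⟩
  rcases hx.2.lt_or_eq with hlt | rfl
  · exact (hpos x hx hlt).le
  · exact hc0.ge

theorem ContinuousOn.exists_zero_nonpos_on_Icc_right {f : ℝ → ℝ} {p q : ℝ}
    (hf : ContinuousOn f (Icc p q)) (hpq : p ≤ q) (hp : 0 ≤ f p) (hq : f q ≤ 0) :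
    ∃ c ∈ Icc p q, f c = 0 ∧ ∀ x ∈ Icc c q, f x ≤ 0 := by
  have hg : ContinuousOn (fun x => -f (-x)) (Icc (-q) (-p)) :=
    (hf.comp continuousOn_neg fun x hx => ⟨le_neg.1 hx.2, neg_le.1 hx.1⟩).neg
  obtain ⟨c, hc, hc0, hnonneg⟩ :=
    hg.exists_zero_nonneg_on_Icc_left (neg_le_neg hpq) (by simpa using hq) (by simpa using hp)
  refine ⟨-c, ⟨le_neg.1 hc.2, neg_le.1 hc.1⟩, by simpa using hc0, fun x hx => ?_⟩
  simpa using hnonneg (-x) ⟨neg_le_neg hx.2, neg_le.1 hx.1⟩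

theorem integral_add_integral_le_integral {f : ℝ → ℝ} {s x₁ y₁ x₂ y₂ t : ℝ}
    (hf : IntervalIntegrable f MeasureTheory.volume s t) (hf0 : ∀ x, 0 ≤ f x)
    (hs : s ≤ x₁) (h₁ : x₁ ≤ y₁) (hy : y₁ ≤ x₂) (h₂ : x₂ ≤ y₂) (ht : y₂ ≤ t) :
    (∫ x in x₁..y₁, f x) + ∫ x in x₂..y₂, f x ≤ ∫ x in s..t, f x := by
  have hf0' {μ : MeasureTheory.Measure ℝ} : 0 ≤ᵐ[μ] f := Filter.Eventually.of_forall hf0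
  have hst : s ≤ t := by linarith
  have hsub {c d : ℝ} (hc : s ≤ c) (hcd : c ≤ d) (hd : d ≤ t) :
      IntervalIntegrable f MeasureTheory.volume c d :=
    hf.mono_set (by rw [uIcc_of_le hcd, uIcc_of_le hst]; exact Icc_subset_Icc hc hd)
  calc (∫ x in x₁..y₁, f x) + ∫ x in x₂..y₂, f x
      ≤ (∫ x in s..y₁, f x) + ∫ x in y₁..t, f x :=
        add_le_add
          (integral_mono_interval hs h₁ le_rfl hf0' (hsub le_rfl (by linarith) (by linarith)))
          (integral_mono_interval hy h₂ ht hf0' (hsub (by linarith) (by linarith) le_rfl))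
    _ = ∫ x in s..t, f x := integral_add_adjacent_intervals
        (hsub le_rfl (by linarith) (by linarith)) (hsub (by linarith) (by linarith) le_rfl)

theorem four_div_le_add_of_one_le_mul {p q I J L : ℝ} (hp : 0 ≤ p) (hq : 0 ≤ q)
    (hpq : p + q ≤ L) (hI : 1 ≤ p * I) (hJ : 1 ≤ q * J) : 4 / L ≤ I + J := by
  have hp' : 0 < p := hp.lt_of_ne (by rintro rfl; linarith)
  have hq' : 0 < q := hq.lt_of_ne (by rintro rfl; linarith)
  calc 4 / L ≤ 4 / (p + q) := div_le_div_of_nonneg_left (by norm_num) (by positivity) hpq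
    _ ≤ 1 / p + 1 / q := by
      rw [div_add_div _ _ hp'.ne' hq'.ne', div_le_div_iff₀ (by positivity) (by positivity)]
      nlinarith [sq_nonneg (p - q)]
    _ ≤ I + J := add_le_add (by rwa [div_le_iff₀' hp']) (by rwa [div_le_iff₀' hq'])

theorem ContDiff.differentiable_deriv_of_two {u : ℝ → ℝ} (hu : ContDiff ℝ 2 u) :
    Differentiable ℝ (deriv u) :=
  (hu.deriv' (n := 1)).differentiable one_ne_zero

theorem integral_deriv_deriv_eq_sub {u : ℝ → ℝ} (hu : ContDiff ℝ 2 u) (x y : ℝ) :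
    ∫ t in x..y, deriv (deriv u) t = deriv u y - deriv u x :=
  integral_deriv_eq_sub (fun t _ => hu.differentiable_deriv_of_two t)
    (((hu.deriv' (n := 1)).continuous_deriv le_rfl).intervalIntegrable x y)

theorem eqOn_zero_of_deriv_deriv_add_mul_eq_zero {a u : ℝ → ℝ} {s t c : ℝ}
    (ha : ContinuousOn a (Icc s t)) (hu : ContDiff ℝ 2 u)
    (heq : ∀ x ∈ Icc s t, deriv (deriv u) x + a x * u x = 0)
    (hc : c ∈ Icc s t) (hc0 : u c = 0) (hc1 : deriv u c = 0) :
    EqOn u 0 (Icc s t) := by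
  obtain ⟨C, hC⟩ := isCompact_Icc.exists_bound_of_continuousOn ha
  set v : ℝ → ℝ × ℝ → ℝ × ℝ := fun x y => (y.2, -(a x * y.1))
  have hv : ∀ x ∈ Icc s t, LipschitzOnWith (Real.toNNReal (max 1 C)) (v x) univ := by
    intro x hx
    refine (LipschitzWith.of_dist_le_mul fun y z => ?_).lipschitzOnWith
    rw [Real.coe_toNNReal _ (le_max_of_le_left zero_le_one)]
    simp only [v, Prod.dist_eq, Real.dist_eq]
    refine max_le ?_ ?_
    · calc |y.2 - z.2| ≤ max |y.1 - z.1| |y.2 - z.2| := le_max_right _ _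
        _ ≤ max 1 C * max |y.1 - z.1| |y.2 - z.2| :=
          le_mul_of_one_le_left (by positivity) (le_max_left _ _)
    · calc |-(a x * y.1) - -(a x * z.1)| = |a x| * |y.1 - z.1| := by
            rw [← abs_mul, ← abs_neg]; congr 1; ring
        _ ≤ max 1 C * max |y.1 - z.1| |y.2 - z.2| :=
          mul_le_mul ((hC x hx).trans (le_max_right _ _)) (le_max_left _ _) (abs_nonneg _)
            (by positivity)
  set f : ℝ → ℝ × ℝ := fun x => (u x, deriv u x)
  have hf : ∀ x ∈ Icc s t, HasDerivAt f (v x (f x)) x := by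
    intro x hx
    have hu'' : deriv (deriv u) x = -(a x * u x) := by linarith [heq x hx]
    simpa [f, v, hu''] using ((hu.differentiable two_ne_zero) x).hasDerivAt.prodMk
      (hu.differentiable_deriv_of_two x).hasDerivAt
  have hf_cont : Continuous f := hu.continuous.prodMk (hu.continuous_deriv one_le_two)
  have h0 : ∀ x, HasDerivAt (fun _ => 0) (v x 0) x := fun x => by
    simpa [v, Prod.mk_zero_zero] using hasDerivAt_const x (0 : ℝ × ℝ)
  have hfc : f c = 0 := by simp [f, hc0, hc1]
  have hright : EqOn f (fun _ => 0) (Icc c t) :=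
    ODE_solution_unique_of_mem_Icc_right (s := fun _ => univ)
      (fun x hx => hv x ⟨hc.1.trans hx.1, hx.2.le⟩) hf_cont.continuousOn
      (fun x hx => (hf x ⟨hc.1.trans hx.1, hx.2.le⟩).hasDerivWithinAt) (fun _ _ => mem_univ _)
      continuousOn_const (fun x _ => (h0 x).hasDerivWithinAt) (fun _ _ => mem_univ _) hfc
  have hleft : EqOn f (fun _ => 0) (Icc s c) :=
    ODE_solution_unique_of_mem_Icc_left (s := fun _ => univ)
      (fun x hx => hv x ⟨hx.1.le, hx.2.trans hc.2⟩) hf_cont.continuousOn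
      (fun x hx => (hf x ⟨hx.1.le, hx.2.trans hc.2⟩).hasDerivWithinAt) (fun _ _ => mem_univ _)
      continuousOn_const (fun x _ => (h0 x).hasDerivWithinAt) (fun _ _ => mem_univ _) hfc
  intro x hx
  rcases le_total x c with h | h
  · exact congrArg Prod.fst (hleft ⟨hx.1, h⟩)
  · exact congrArg Prod.fst (hright ⟨h, hx.2⟩)

theorem hasDerivAt_logDeriv_of_deriv_deriv_add_mul_eq_zero {a u : ℝ → ℝ} {x : ℝ}
    (hu : ContDiff ℝ 2 u) (heq : deriv (deriv u) x + a x * u x = 0) (hx : u x ≠ 0) :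
    HasDerivAt (logDeriv u) (-a x - logDeriv u x ^ 2) x := by
  refine HasDerivAt.congr_deriv (f := logDeriv u)
    ((hu.differentiable_deriv_of_two x).hasDerivAt.div
      ((hu.differentiable two_ne_zero) x).hasDerivAt hx) ?_
  rw [logDeriv_apply]
  field_simp
  linear_combination (u x) * heq

section OneSignedArc

variable {a u : ℝ → ℝ} {α β : ℝ}

theorem neg_mul_integral_le_deriv_sub_deriv (ha : ContinuousOn a (Icc α β))
    (hu : ContDiff ℝ 2 u) (heq : ∀ x ∈ Icc α β, deriv (deriv u) x + a x * u x = 0) {M : ℝ}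
    (hu_nonneg : ∀ x ∈ Icc α β, 0 ≤ u x) (hu_le : ∀ x ∈ Icc α β, u x ≤ M)
    {x y : ℝ} (hx : x ∈ Icc α β) (hy : y ∈ Icc α β) (hxy : x ≤ y) :
    -(M * ∫ t in α..β, max (a t) 0) ≤ deriv u y - deriv u x := by
  have hM : 0 ≤ M := (hu_nonneg x hx).trans (hu_le x hx)
  have hsub : Icc x y ⊆ Icc α β := Icc_subset_Icc hx.1 hy.2
  have ha_pos : ContinuousOn (fun t => max (a t) 0) (Icc α β) := ha.sup continuousOn_const
  calc -(M * ∫ t in α..β, max (a t) 0) ≤ -(M * ∫ t in x..y, max (a t) 0) := by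
        gcongr
        exact integral_mono_interval hx.1 hxy hy.2
          (Filter.Eventually.of_forall fun t => le_max_right _ _)
          (ha_pos.intervalIntegrable_of_Icc (hx.1.trans (hxy.trans hy.2)))
    _ = ∫ t in x..y, -(M * max (a t) 0) := by rw [integral_neg, integral_const_mul]
    _ ≤ ∫ t in x..y, deriv (deriv u) t := by
        refine integral_mono_on hxy (((ha_pos.mono hsub).intervalIntegrable_of_Icc hxy).const_mul
          M).neg (((hu.deriv' (n := 1)).continuous_deriv le_rfl).intervalIntegrable x y)
          fun t ht => ?_
        have ht' := hsub ht
        have hau : a t * u t ≤ max (a t) 0 * M :=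
          (mul_le_mul_of_nonneg_right (le_max_left _ _) (hu_nonneg t ht')).trans
            (mul_le_mul_of_nonneg_left (hu_le t ht') (le_max_right _ _))
        linarith [heq t ht']
    _ = deriv u y - deriv u x := integral_deriv_deriv_eq_sub hu x y

theorem one_le_sub_mul_integral_of_deriv_left_eq_zero (hαβ : α ≤ β)
    (ha : ContinuousOn a (Icc α β)) (hu : ContDiff ℝ 2 u)
    (heq : ∀ x ∈ Icc α β, deriv (deriv u) x + a x * u x = 0)
    (hu_nonneg : ∀ x ∈ Icc α β, 0 ≤ u x) (hu_le : ∀ x ∈ Icc α β, u x ≤ u α)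
    (hα : 0 < u α) (hdα : deriv u α = 0) (hβ : u β = 0) :
    1 ≤ (β - α) * ∫ t in α..β, max (a t) 0 := by
  set I := ∫ t in α..β, max (a t) 0
  have hderiv : ∀ x ∈ interior (Icc α β), -(u α * I) ≤ deriv u x := fun x hx => by
    simpa [hdα] using neg_mul_integral_le_deriv_sub_deriv ha hu heq hu_nonneg hu_le
      (left_mem_Icc.2 hαβ) (interior_subset hx) (interior_subset hx).1
  have := (convex_Icc α β).mul_sub_le_image_sub_of_le_deriv hu.continuous.continuousOn
    (hu.differentiable two_ne_zero).differentiableOn hderiv α (left_mem_Icc.2 hαβ) β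
    (right_mem_Icc.2 hαβ) hαβ
  rw [hβ] at this
  nlinarith

theorem one_le_sub_mul_integral_of_deriv_right_eq_zero (hαβ : α ≤ β)
    (ha : ContinuousOn a (Icc α β)) (hu : ContDiff ℝ 2 u)
    (heq : ∀ x ∈ Icc α β, deriv (deriv u) x + a x * u x = 0)
    (hu_nonneg : ∀ x ∈ Icc α β, 0 ≤ u x) (hu_le : ∀ x ∈ Icc α β, u x ≤ u β)
    (hβ : 0 < u β) (hdβ : deriv u β = 0) (hα : u α = 0) :
    1 ≤ (β - α) * ∫ t in α..β, max (a t) 0 := by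
  set I := ∫ t in α..β, max (a t) 0
  have hderiv : ∀ x ∈ interior (Icc α β), deriv u x ≤ u β * I := fun x hx => by
    simpa [hdβ] using neg_mul_integral_le_deriv_sub_deriv ha hu heq hu_nonneg hu_le
      (interior_subset hx) (right_mem_Icc.2 hαβ) (interior_subset hx).2
  have := (convex_Icc α β).image_sub_le_mul_sub_of_deriv_le hu.continuous.continuousOn
    (hu.differentiable two_ne_zero).differentiableOn hderiv α (left_mem_Icc.2 hαβ) β
    (right_mem_Icc.2 hαβ) hαβ
  rw [hα] at this
  nlinarith

end OneSignedArc

theorem four_div_le_integral_of_isMaxOn_of_isMinOn {L : ℝ} {a u : ℝ → ℝ}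
    (ha : ContinuousOn a (Icc 0 L)) (hu : ContDiff ℝ 2 u)
    (heq : ∀ x ∈ Icc 0 L, deriv (deriv u) x + a x * u x = 0) {b b' : ℝ}
    (hb : b ∈ Icc 0 L) (hb' : b' ∈ Icc 0 L) (hbb' : b ≤ b')
    (hmax : IsMaxOn u (Icc 0 L) b) (hmin : IsMinOn u (Icc 0 L) b')
    (hub : 0 < u b) (hub' : u b' < 0) (hdb : deriv u b = 0) (hdb' : deriv u b' = 0) :
    4 / L ≤ ∫ t in (0 : ℝ)..L, max (a t) 0 := by
  have hsub : Icc b b' ⊆ Icc 0 L := Icc_subset_Icc hb.1 hb'.2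
  obtain ⟨c₁, hc₁, huc₁, hnonneg⟩ :=
    hu.continuous.continuousOn.exists_zero_nonneg_on_Icc_left hbb' hub.le hub'.le
  obtain ⟨c₂, hc₂, huc₂, hnonpos⟩ :=
    hu.continuous.continuousOn.exists_zero_nonpos_on_Icc_right hc₁.2 huc₁.ge hub'.le
  have hsub₁ : Icc b c₁ ⊆ Icc 0 L := (Icc_subset_Icc_right hc₁.2).trans hsub
  have hsub₂ : Icc c₂ b' ⊆ Icc 0 L := (Icc_subset_Icc_left (hc₁.1.trans hc₂.1)).trans hsub
  have h₁ := one_le_sub_mul_integral_of_deriv_left_eq_zero hc₁.1 (ha.mono hsub₁) hu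
    (fun x hx => heq x (hsub₁ hx)) hnonneg (fun x hx => hmax (hsub₁ hx)) hub hdb huc₁
  have h₂ := one_le_sub_mul_integral_of_deriv_right_eq_zero (u := -u) hc₂.2 (ha.mono hsub₂) hu.neg
    (fun x hx => by simp [deriv.neg']; linarith [heq x (hsub₂ hx)])
    (fun x hx => neg_nonneg.2 (hnonpos x hx)) (fun x hx => neg_le_neg (hmin (hsub₂ hx)))
    (neg_pos.2 hub') (by simp [deriv.neg', hdb']) (by simp [huc₂])
  exact (four_div_le_add_of_one_le_mul (sub_nonneg.2 hc₁.1) (sub_nonneg.2 hc₂.2)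
    (by linarith [hc₂.1, hb.1, hb'.2]) h₁ h₂).trans
    (integral_add_integral_le_integral
      ((ha.sup continuousOn_const).intervalIntegrable_of_Icc (hb.1.trans hb.2))
      (fun x => le_max_right _ _) hb.1 hc₁.1 hc₂.1 hc₂.2 hb'.2)

structure IsNeumannSolution (L : ℝ) (a u : ℝ → ℝ) : Prop where
  contDiff : ContDiff ℝ 2 u
  ode : ∀ x ∈ Icc 0 L, deriv (deriv u) x + a x * u x = 0
  deriv_left : deriv u 0 = 0
  deriv_right : deriv u L = 0

namespace IsNeumannSolution

variable {L : ℝ} {a u : ℝ → ℝ}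

theorem neg (h : IsNeumannSolution L a u) : IsNeumannSolution L a (-u) where
  contDiff := h.contDiff.neg
  ode x hx := by simp [deriv.neg']; linarith [h.ode x hx]
  deriv_left := by simp [deriv.neg', h.deriv_left]
  deriv_right := by simp [deriv.neg', h.deriv_right]

theorem deriv_eq_zero_of_isExtrOn (h : IsNeumannSolution L a u) {c : ℝ} (hc : c ∈ Icc 0 L)
    (hext : IsExtrOn u (Icc 0 L) c) : deriv u c = 0 := by
  rcases hc.1.eq_or_lt with rfl | h₀
  · exact h.deriv_left
  rcases hc.2.eq_or_lt with rfl | hL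
  · exact h.deriv_right
  exact (hext.isLocalExtr (Icc_mem_nhds h₀ hL)).deriv_eq_zero

theorem four_div_le_integral_of_sign_change (h : IsNeumannSolution L a u)
    (ha : ContinuousOn a (Icc 0 L)) (hp : ∃ p ∈ Icc 0 L, 0 < u p)
    (hq : ∃ q ∈ Icc 0 L, u q < 0) : 4 / L ≤ ∫ t in (0 : ℝ)..L, max (a t) 0 := by
  obtain ⟨p, hp, hup⟩ := hp
  obtain ⟨q, hq, huq⟩ := hq
  have hne : (Icc 0 L).Nonempty := ⟨p, hp⟩
  obtain ⟨b, hb, hmax⟩ := isCompact_Icc.exists_isMaxOn hne h.contDiff.continuous.continuousOn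
  obtain ⟨b', hb', hmin⟩ := isCompact_Icc.exists_isMinOn hne h.contDiff.continuous.continuousOn
  have hub : 0 < u b := hup.trans_le (hmax hp)
  have hub' : u b' < 0 := (hmin hq).trans_lt huq
  have hdb := h.deriv_eq_zero_of_isExtrOn hb hmax.isExtr
  have hdb' := h.deriv_eq_zero_of_isExtrOn hb' hmin.isExtr
  rcases le_total b b' with hbb' | hb'b
  · exact four_div_le_integral_of_isMaxOn_of_isMinOn ha h.contDiff h.ode hb hb' hbb' hmax hmin
      hub hub' hdb hdb'
  · exact four_div_le_integral_of_isMaxOn_of_isMinOn ha h.neg.contDiff h.neg.ode hb' hb hb'b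
      hmin.neg hmax.neg (neg_pos.2 hub') (neg_neg_of_pos hub) (by simp [deriv.neg', hdb'])
      (by simp [deriv.neg', hdb])

theorem coeff_eqOn_zero_of_forall_ne_zero (h : IsNeumannSolution L a u) (hL : 0 < L)
    (ha : ContinuousOn a (Icc 0 L)) (hamean : 0 ≤ ∫ x in (0 : ℝ)..L, a x)
    (hne : ∀ x ∈ Icc 0 L, u x ≠ 0) : EqOn a 0 (Icc 0 L) := by
  set v := logDeriv u
  have hv : ∀ x ∈ Icc 0 L, HasDerivAt v (-a x - v x ^ 2) x := fun x hx =>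
    hasDerivAt_logDeriv_of_deriv_deriv_add_mul_eq_zero h.contDiff (h.ode x hx) (hne x hx)
  have hv_cont : ContinuousOn v (Icc 0 L) := fun x hx => (hv x hx).continuousAt.continuousWithinAt
  have hv_sq : ∫ x in (0 : ℝ)..L, v x ^ 2 ≤ 0 := by
    have hftc := integral_eq_sub_of_hasDerivAt (fun x hx => hv x (by rwa [uIcc_of_le hL.le] at hx))
      ((ha.neg.sub (hv_cont.pow 2)).intervalIntegrable_of_Icc hL.le)
    have ha_int : IntervalIntegrable (fun x => -a x) MeasureTheory.volume 0 L :=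
      ha.neg.intervalIntegrable_of_Icc hL.le
    have hv_int : IntervalIntegrable (fun x => v x ^ 2) MeasureTheory.volume 0 L :=
      (hv_cont.pow 2).intervalIntegrable_of_Icc hL.le
    rw [integral_sub ha_int hv_int, integral_neg] at hftc
    have hv₀ : v 0 = 0 := by simp [v, logDeriv_apply, h.deriv_left]
    have hv_L : v L = 0 := by simp [v, logDeriv_apply, h.deriv_right]
    rw [hv₀, hv_L, sub_zero] at hftc
    linarith
  have hv_zero : ∀ x ∈ Icc 0 L, v x = 0 := by
    by_contra! ⟨x, hx, hvx⟩
    exact (integral_pos hL (hv_cont.pow 2) (fun y _ => sq_nonneg (v y))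
      ⟨x, hx, sq_pos_of_ne_zero hvx⟩).not_ge hv_sq
  intro x hx
  have hv_const : HasDerivWithinAt v 0 (Icc 0 L) x :=
    (hasDerivWithinAt_const x _ 0).congr (fun y hy => hv_zero y hy) (hv_zero x hx)
  have := (uniqueDiffOn_Icc hL x hx).eq_deriv _ (hv x hx).hasDerivWithinAt hv_const
  simpa [hv_zero x hx] using this

theorem eqOn_zero_of_nonneg (h : IsNeumannSolution L a u) (hL : 0 < L)
    (ha : ContinuousOn a (Icc 0 L)) (hane : ∃ x ∈ Icc 0 L, a x ≠ 0)
    (hamean : 0 ≤ ∫ x in (0 : ℝ)..L, a x) (hnonneg : ∀ x ∈ Icc 0 L, 0 ≤ u x) :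
    EqOn u 0 (Icc 0 L) := by
  by_cases hz : ∃ c ∈ Icc 0 L, u c = 0
  · obtain ⟨c, hc, huc⟩ := hz
    have hmin : IsMinOn u (Icc 0 L) c := fun x hx => by simpa [huc] using hnonneg x hx
    exact eqOn_zero_of_deriv_deriv_add_mul_eq_zero ha h.contDiff h.ode hc huc
      (h.deriv_eq_zero_of_isExtrOn hc hmin.isExtr)
  · push Not at hz
    obtain ⟨x, hx, hax⟩ := hane
    exact absurd (h.coeff_eqOn_zero_of_forall_ne_zero hL ha hamean hz hx) hax

end IsNeumannSolution

theorem L1_lyapunov_uniqueness (L : ℝ) (hL : 0 < L) (a u : ℝ → ℝ)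
    (ha : ContinuousOn a (Icc 0 L))
    (hane : ∃ x ∈ Icc 0 L, a x ≠ 0)
    (hamean : 0 ≤ ∫ x in (0:ℝ)..L, a x)
    (haplus : (∫ x in (0:ℝ)..L, max (a x) 0) < 4 / L)
    (hu : ContDiff ℝ 2 u)
    (heq : ∀ x ∈ Icc 0 L, deriv (deriv u) x + a x * u x = 0)
    (hu0 : deriv u 0 = 0) (huL : deriv u L = 0) :
    ∀ x ∈ Icc 0 L, u x = 0 := by
  have h : IsNeumannSolution L a u := ⟨hu, heq, hu0, huL⟩
  by_cases hpos : ∃ p ∈ Icc 0 L, 0 < u p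
  · by_cases hneg : ∃ q ∈ Icc 0 L, u q < 0
    · exact absurd (h.four_div_le_integral_of_sign_change ha hpos hneg) haplus.not_ge
    · push Not at hneg
      exact fun x hx => h.eqOn_zero_of_nonneg hL ha hane hamean hneg hx
  · push Not at hpos
    intro x hx
    simpa using h.neg.eqOn_zero_of_nonneg hL ha hane hamean
      (fun y hy => neg_nonneg.2 (hpos y hy)) hx
end

section
/- Let a ∈ C[0,L] with a not identically zero, ∫₀ᴸ a(x) dx ≥ 0, a(x) ≤ π²/L² for all x ∈ [0,L], and a(x) < π²/L² on a set of positive measure. If u ∈ C²[0,L] satisfies u'' + a·u = 0 on (0,L) with u'(0) = u'(L) = 0, then u ≡ 0. -/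
/-!
If `u` never vanishes, `v = u'/u` solves the Riccati equation `v' = -a - v²`; integrating and
using `v(0) = v(L) = 0` gives `∫ v² = -∫ a ≤ 0`, so `v ≡ 0`, hence `u'' ≡ 0` and `a ≡ 0`.

If `u` vanishes at an endpoint, then `u = u' = 0` there and Grönwall gives `u ≡ 0`. Otherwise
`u'(0) = 0` and `a ≤ (π/L)²` make the Wronskian of `u` with `cos (π x / L)` monotone, and
Sturm comparison keeps every zero of `u` at distance at least `L/2` from `0`, and by reflection
from `L`. So `u` vanishes exactly at `L/2`, and equality in the comparison on both halves forces
`a = (π/L)²` off `{0, L/2, L}`, contradicting `a < (π/L)²` on a set of positive measure.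
-/

open Set Real intervalIntegral MeasureTheory

theorem deriv_eq_zero_of_eqOn_const {𝕜 F : Type*} [NontriviallyNormedField 𝕜]
    [NormedAddCommGroup F] [NormedSpace 𝕜 F] {f : 𝕜 → F} {s : Set 𝕜} {x : 𝕜} {c : F}
    (hs : UniqueDiffWithinAt 𝕜 s x) (hx : x ∈ s) (hf : DifferentiableAt 𝕜 f x)
    (h : EqOn f (fun _ ↦ c) s) : deriv f x = 0 := by
  rw [← hf.derivWithin hs, derivWithin_congr h (h hx), derivWithin_fun_const, Pi.zero_apply]

theorem IsPreconnected.forall_pos_of_ne_zero {X : Type*} [TopologicalSpace X] {s : Set X}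
    {f : X → ℝ} {x₀ : X} (hs : IsPreconnected s) (hf : ContinuousOn f s)
    (hne : ∀ x ∈ s, f x ≠ 0) (hx₀ : x₀ ∈ s) (hpos : 0 < f x₀) : ∀ x ∈ s, 0 < f x := by
  intro x hx
  by_contra! hle
  obtain ⟨y, hy, hy0⟩ := hs.intermediate_value hx hx₀ hf ⟨hle, hpos.le⟩
  exact hne y hy hy0

theorem exists_first_zero {f : ℝ → ℝ} {a z : ℝ} (hf : ContinuousOn f (Icc a z)) (ha : f a ≠ 0)
    (haz : a ≤ z) (hfz : f z = 0) : ∃ c ∈ Ioc a z, f c = 0 ∧ ∀ x ∈ Ico a c, f x ≠ 0 := by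
  set S := {x ∈ Icc a z | f x = 0}
  have hbdd : BddBelow S := ⟨a, fun x hx ↦ hx.1.1⟩
  obtain ⟨⟨hac, hcz⟩, hfc⟩ : sInf S ∈ S :=
    (hf.preimage_isClosed_of_isClosed isClosed_Icc isClosed_singleton).csInf_mem
      ⟨z, ⟨haz, le_rfl⟩, hfz⟩ hbdd
  refine ⟨sInf S, ⟨hac.lt_of_ne fun h ↦ ha (h ▸ hfc), hcz⟩, hfc, fun x hx hfx ↦ ?_⟩
  exact hx.2.not_ge (csInf_le hbdd ⟨⟨hx.1, hx.2.le.trans hcz⟩, hfx⟩)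

theorem deriv_deriv_comp_const_sub (f : ℝ → ℝ) (L x : ℝ) :
    deriv (deriv fun y ↦ f (L - y)) x = deriv (deriv f) (L - x) := by
  have : deriv (fun y ↦ f (L - y)) = fun y ↦ -deriv f (L - y) :=
    funext fun y ↦ deriv_comp_const_sub f L y
  rw [this, deriv.fun_neg, deriv_comp_const_sub, neg_neg]

section

variable {a u : ℝ → ℝ}

theorem eq_zero_of_apply_eq_zero_of_deriv_eq_zero {T : ℝ} (ha : ContinuousOn a (Icc 0 T))
    (hu : ContDiff ℝ 2 u) (heq : ∀ x ∈ Icc 0 T, deriv (deriv u) x + a x * u x = 0)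
    (h0 : u 0 = 0) (h0' : deriv u 0 = 0) : ∀ x ∈ Icc 0 T, u x = 0 := by
  obtain ⟨M, hM⟩ := isCompact_Icc.exists_bound_of_continuousOn ha
  have hd := hu.differentiable two_ne_zero
  have hd' := hu.differentiable_deriv_two
  have hK : ∀ t, 0 ≤ t → t ≤ max 1 M * t := fun t ht ↦ le_mul_of_one_le_left ht (le_max_left _ _)
  -- Grönwall for the first-order system `(u, u')' = (u', -a u)`.
  have hsys := eq_zero_of_abs_deriv_le_mul_abs_self_of_eq_zero_right
    (f := fun x ↦ (u x, deriv u x)) (K := max 1 M) (a := 0)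
    (hd.continuous.prodMk hd'.continuous).continuousOn
    (fun x _ ↦ ((hd x).hasDerivAt.prodMk (hd' x).hasDerivAt).hasDerivWithinAt)
    (by simp [h0, h0']) fun x hx ↦ by
      have hxT := Ico_subset_Icc_self hx
      rw [show deriv (deriv u) x = -(a x * u x) by linear_combination heq x hxT]
      simp only [Prod.norm_def, norm_neg, norm_mul]
      refine max_le ((le_max_right _ _).trans (hK _ (by positivity))) ?_
      exact mul_le_mul ((hM x hxT).trans (le_max_right _ _)) (le_max_left _ _)
        (norm_nonneg _) (by positivity)
  exact fun x hx ↦ congrArg Prod.fst (hsys x hx)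

theorem integral_sq_deriv_div_eq_neg_integral {L : ℝ} (hL : 0 ≤ L)
    (ha : ContinuousOn a (Icc 0 L)) (hu : ContDiff ℝ 2 u)
    (heq : ∀ x ∈ Icc 0 L, deriv (deriv u) x + a x * u x = 0)
    (hu0 : deriv u 0 = 0) (huL : deriv u L = 0) (hne : ∀ x ∈ Icc 0 L, u x ≠ 0) :
    ∫ x in 0..L, (deriv u x / u x) ^ 2 = -∫ x in 0..L, a x := by
  have hd := hu.differentiable two_ne_zero
  have hd' := hu.differentiable_deriv_two
  have hv : ContinuousOn (fun x ↦ deriv u x / u x) (Icc 0 L) :=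
    hd'.continuous.continuousOn.div hd.continuous.continuousOn hne
  -- `v = u'/u` solves the Riccati equation `v' = -a - v²`.
  have hriccati : ∫ x in 0..L, (-a x - (deriv u x / u x) ^ 2) = 0 := by
    rw [integral_eq_sub_of_hasDerivAt (f := fun x ↦ deriv u x / u x)]
    · simp [hu0, huL]
    · intro x hx
      rw [uIcc_of_le hL] at hx
      have hux := hne x hx
      refine ((hd' x).hasDerivAt.div (hd x).hasDerivAt hux).congr_deriv ?_
      field_simp
      linear_combination u x * heq x hx
    · exact (ha.neg.sub (hv.pow 2)).intervalIntegrable_of_Icc hL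
  rw [integral_sub (f := fun x ↦ -a x) (g := fun x ↦ (deriv u x / u x) ^ 2)
    (ha.intervalIntegrable_of_Icc hL).neg ((hv.pow 2).intervalIntegrable_of_Icc hL),
    intervalIntegral.integral_neg] at hriccati
  linarith

theorem eq_zero_of_solution_forall_ne_zero {L : ℝ} (hL : 0 < L) (ha : ContinuousOn a (Icc 0 L))
    (hamean : 0 ≤ ∫ x in 0..L, a x) (hu : ContDiff ℝ 2 u)
    (heq : ∀ x ∈ Icc 0 L, deriv (deriv u) x + a x * u x = 0)
    (hu0 : deriv u 0 = 0) (huL : deriv u L = 0) (hne : ∀ x ∈ Icc 0 L, u x ≠ 0) :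
    ∀ x ∈ Icc 0 L, a x = 0 := by
  have hv2 : ContinuousOn (fun x ↦ (deriv u x / u x) ^ 2) (Icc 0 L) :=
    (hu.differentiable_deriv_two.continuous.continuousOn.div
      (hu.differentiable two_ne_zero).continuous.continuousOn hne).pow 2
  have hv : ∀ x ∈ Icc 0 L, deriv u x / u x = 0 := by
    by_contra! ⟨x, hx, hvx⟩
    have hpos := integral_pos hL hv2 (fun _ _ ↦ sq_nonneg _) ⟨x, hx, by positivity⟩
    linarith [integral_sq_deriv_div_eq_neg_integral hL.le ha hu heq hu0 huL hne]
  have hu' : EqOn (deriv u) (fun _ ↦ 0) (Icc 0 L) := fun x hx ↦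
    (div_eq_zero_iff.mp (hv x hx)).resolve_right (hne x hx)
  intro x hx
  have hu'' := deriv_eq_zero_of_eqOn_const (uniqueDiffOn_Icc hL x hx) hx
    (hu.differentiable_deriv_two x) hu'
  simpa [hu'', hne x hx] using heq x hx

/-- The Wronskian `φ u' - φ' u` of `φ x = cos (m x)` and `u`. -/
noncomputable def cosWronskian (m : ℝ) (u : ℝ → ℝ) (x : ℝ) : ℝ :=
  cos (m * x) * deriv u x + m * sin (m * x) * u x

theorem hasDerivAt_cosWronskian (hu : ContDiff ℝ 2 u) (m x : ℝ) :
    HasDerivAt (cosWronskian m u) (cos (m * x) * (deriv (deriv u) x + m ^ 2 * u x)) x := by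
  have hmx : HasDerivAt (fun y ↦ m * y) m x := by simpa using (hasDerivAt_id x).const_mul m
  refine ((hmx.cos.mul (hu.differentiable_deriv_two x).hasDerivAt).add
    ((hmx.sin.const_mul m).mul (hu.differentiable two_ne_zero x).hasDerivAt)).congr_deriv ?_
  ring

theorem cosWronskian_zero {m : ℝ} (hu0 : deriv u 0 = 0) : cosWronskian m u 0 = 0 := by
  simp [cosWronskian, hu0]

theorem monotoneOn_cosWronskian {m c : ℝ} (hu : ContDiff ℝ 2 u) (hm : 0 ≤ m)
    (hmc : m * c ≤ π / 2) (hsuper : ∀ x ∈ Ioo 0 c, 0 ≤ deriv (deriv u) x + m ^ 2 * u x) :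
    MonotoneOn (cosWronskian m u) (Icc 0 c) := by
  refine monotoneOn_of_hasDerivWithinAt_nonneg (convex_Icc 0 c)
    (fun x _ ↦ (hasDerivAt_cosWronskian hu m x).continuousAt.continuousWithinAt)
    (fun x _ ↦ (hasDerivAt_cosWronskian hu m x).hasDerivWithinAt) ?_
  rw [interior_Icc]
  intro x hx
  refine mul_nonneg (cos_nonneg_of_mem_Icc ⟨?_, ?_⟩) (hsuper x hx) <;>
    nlinarith [pi_pos, hx.1, hx.2]

theorem pi_div_two_le_mul_of_apply_eq_zero {m c : ℝ} (hu : ContDiff ℝ 2 u) (hm : 0 < m)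
    (hc : 0 < c) (hsuper : ∀ x ∈ Ioo 0 c, 0 ≤ deriv (deriv u) x + m ^ 2 * u x)
    (hu0 : deriv u 0 = 0) (hpos : 0 < u 0) (huc : u c = 0) : π / 2 ≤ m * c := by
  by_contra! hmc
  have hcos : ∀ x ∈ Icc 0 c, 0 < cos (m * x) := fun x hx ↦
    cos_pos_of_mem_Ioo ⟨by nlinarith [pi_pos, hx.1], by nlinarith [hx.2]⟩
  have hW : ∀ x ∈ Icc 0 c, 0 ≤ cosWronskian m u x := fun x hx ↦
    cosWronskian_zero (m := m) hu0 ▸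
      monotoneOn_cosWronskian hu hm.le hmc.le hsuper (left_mem_Icc.2 hc.le) hx hx.1
  -- `(u / φ)' = W / φ²`, so `u / φ` increases from `u 0 > 0` to `u c = 0`.
  have hderiv : ∀ x ∈ Icc 0 c, HasDerivAt (fun y ↦ u y / cos (m * y))
      (cosWronskian m u x / cos (m * x) ^ 2) x := by
    intro x hx
    have hmx : HasDerivAt (fun y ↦ m * y) m x := by simpa using (hasDerivAt_id x).const_mul m
    refine ((hu.differentiable two_ne_zero x).hasDerivAt.div hmx.cos
      (hcos x hx).ne').congr_deriv ?_
    simp only [cosWronskian]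
    ring
  have hmono : MonotoneOn (fun y ↦ u y / cos (m * y)) (Icc 0 c) := by
    refine monotoneOn_of_hasDerivWithinAt_nonneg (convex_Icc 0 c)
      (fun x hx ↦ (hderiv x hx).continuousAt.continuousWithinAt)
      (fun x hx ↦ (hderiv x (interior_subset hx)).hasDerivWithinAt)
      (fun x hx ↦ div_nonneg (hW x (interior_subset hx)) (sq_nonneg _))
  have := hmono (left_mem_Icc.2 hc.le) (right_mem_Icc.2 hc.le) hc.le
  simp [huc] at this
  linarith

theorem deriv_deriv_add_sq_mul_eq_zero_of_mul_eq_pi_div_two {m c : ℝ} (hu : ContDiff ℝ 2 u)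
    (hm : 0 < m) (hmc : m * c = π / 2) (hsuper : ∀ x ∈ Ioo 0 c, 0 ≤ deriv (deriv u) x + m ^ 2 * u x)
    (hu0 : deriv u 0 = 0) (huc : u c = 0) :
    ∀ x ∈ Ioo 0 c, deriv (deriv u) x + m ^ 2 * u x = 0 := by
  have hc : 0 < c := by nlinarith [pi_pos]
  have hmono := monotoneOn_cosWronskian hu hm.le hmc.le hsuper
  have hWc : cosWronskian m u c = 0 := by simp [cosWronskian, hmc, huc]
  have hW : EqOn (cosWronskian m u) (fun _ ↦ 0) (Icc 0 c) := fun x hx ↦ le_antisymm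
    (hWc ▸ hmono hx (right_mem_Icc.2 hc.le) hx.2)
    (cosWronskian_zero (m := m) hu0 ▸ hmono (left_mem_Icc.2 hc.le) hx hx.1)
  intro x hx
  have hcos : 0 < cos (m * x) :=
    cos_pos_of_mem_Ioo ⟨by nlinarith [pi_pos, hx.1], by nlinarith [hx.2]⟩
  have := deriv_eq_zero_of_eqOn_const (uniqueDiffOn_Icc hc x (Ioo_subset_Icc_self hx))
    (Ioo_subset_Icc_self hx) (hasDerivAt_cosWronskian hu m x).differentiableAt hW
  rw [(hasDerivAt_cosWronskian hu m x).deriv] at this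
  exact (mul_eq_zero.mp this).resolve_left hcos.ne'

theorem sturm_first_zero {m c : ℝ} (hm : 0 < m) (hc : 0 < c) (hale : ∀ x ∈ Ioo 0 c, a x ≤ m ^ 2)
    (hu : ContDiff ℝ 2 u) (heq : ∀ x ∈ Ioo 0 c, deriv (deriv u) x + a x * u x = 0)
    (hu0 : deriv u 0 = 0) (hne : ∀ x ∈ Ico 0 c, u x ≠ 0) (huc : u c = 0) :
    π / 2 ≤ m * c ∧ (m * c = π / 2 → ∀ x ∈ Ioo 0 c, a x = m ^ 2) := by
  wlog h0 : 0 < u 0 generalizing u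
  · refine this hu.neg (fun x hx ↦ ?_) (by simp [hu0]) (fun x hx ↦ by simpa using hne x hx)
      (by simp [huc]) (by simpa using (hne 0 ⟨le_rfl, hc⟩).lt_of_le (not_lt.mp h0))
    simp only [deriv.fun_neg']
    linear_combination -heq x hx
  have hpos : ∀ x ∈ Ico 0 c, 0 < u x := isPreconnected_Ico.forall_pos_of_ne_zero
    (hu.continuous.continuousOn) hne ⟨le_rfl, hc⟩ h0
  have hsuper_eq : ∀ x ∈ Ioo 0 c, deriv (deriv u) x + m ^ 2 * u x = (m ^ 2 - a x) * u x :=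
    fun x hx ↦ by linear_combination heq x hx
  have hsuper : ∀ x ∈ Ioo 0 c, 0 ≤ deriv (deriv u) x + m ^ 2 * u x := fun x hx ↦ by
    rw [hsuper_eq x hx]
    exact mul_nonneg (sub_nonneg.2 (hale x hx)) (hpos x (Ioo_subset_Ico_self hx)).le
  refine ⟨pi_div_two_le_mul_of_apply_eq_zero hu hm hc hsuper hu0 h0 huc, fun hmc x hx ↦ ?_⟩
  have := deriv_deriv_add_sq_mul_eq_zero_of_mul_eq_pi_div_two hu hm hmc hsuper hu0 huc x hx
  rw [hsuper_eq x hx] at this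
  linarith [(mul_eq_zero.mp this).resolve_right (hpos x (Ioo_subset_Ico_self hx)).ne']

theorem half_le_of_apply_eq_zero {L z : ℝ} (hL : 0 < L) (hale : ∀ x ∈ Icc 0 L, a x ≤ (π / L) ^ 2)
    (hu : ContDiff ℝ 2 u) (heq : ∀ x ∈ Icc 0 L, deriv (deriv u) x + a x * u x = 0)
    (hu0 : deriv u 0 = 0) (h0 : u 0 ≠ 0) (hz : z ∈ Icc 0 L) (huz : u z = 0) :
    L / 2 ≤ z ∧ (z = L / 2 → ∀ x ∈ Ioo 0 (L / 2), a x = (π / L) ^ 2) := by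
  obtain ⟨c, ⟨hc0, hcz⟩, huc, hne⟩ :=
    exists_first_zero hu.continuous.continuousOn h0 hz.1 huz
  have hsub : Ioo 0 c ⊆ Icc 0 L := fun x hx ↦ ⟨hx.1.le, hx.2.le.trans (hcz.trans hz.2)⟩
  obtain ⟨hle, heqOn⟩ := sturm_first_zero (div_pos pi_pos hL) hc0 (fun x hx ↦ hale x (hsub hx))
    hu (fun x hx ↦ heq x (hsub hx)) hu0 hne huc
  have hc : L / 2 ≤ c := by
    rw [div_mul_eq_mul_div, le_div_iff₀ hL] at hle
    nlinarith [pi_pos]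
  refine ⟨hc.trans hcz, fun hzL ↦ ?_⟩
  obtain rfl : c = L / 2 := by linarith
  exact heqOn (by field_simp)

theorem comp_const_sub_of_deriv_deriv_add_mul_eq_zero {L : ℝ}
    (heq : ∀ x ∈ Icc 0 L, deriv (deriv u) x + a x * u x = 0) :
    ∀ x ∈ Icc 0 L, deriv (deriv fun y ↦ u (L - y)) x + a (L - x) * u (L - x) = 0 :=
  fun x hx ↦ by
    simpa [deriv_deriv_comp_const_sub] using heq _ (sub_mem_Icc_zero_iff_right.2 hx)

theorem eq_zero_of_apply_eq_zero_of_deriv_eq_zero_right {L : ℝ} (ha : ContinuousOn a (Icc 0 L))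
    (hu : ContDiff ℝ 2 u) (heq : ∀ x ∈ Icc 0 L, deriv (deriv u) x + a x * u x = 0)
    (hL : u L = 0) (hL' : deriv u L = 0) : ∀ x ∈ Icc 0 L, u x = 0 := by
  have hrefl := eq_zero_of_apply_eq_zero_of_deriv_eq_zero (a := fun x ↦ a (L - x))
    (u := fun x ↦ u (L - x))
    (ha.comp (continuous_const.sub continuous_id).continuousOn
      fun x hx ↦ sub_mem_Icc_zero_iff_right.2 hx)
    (hu.comp (contDiff_const.sub contDiff_id)) (comp_const_sub_of_deriv_deriv_add_mul_eq_zero heq)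
    (by simpa using hL) (by simp [deriv_comp_const_sub, hL'])
  intro x hx
  simpa using hrefl (L - x) (sub_mem_Icc_zero_iff_right.2 hx)

theorem volume_setOf_lt_eq_zero_of_exists_zero {L : ℝ} (hL : 0 < L)
    (hale : ∀ x ∈ Icc 0 L, a x ≤ (π / L) ^ 2) (hu : ContDiff ℝ 2 u)
    (heq : ∀ x ∈ Icc 0 L, deriv (deriv u) x + a x * u x = 0)
    (hu0 : deriv u 0 = 0) (huL : deriv u L = 0) (h0 : u 0 ≠ 0) (hL0 : u L ≠ 0)
    (hzero : ∃ z ∈ Icc 0 L, u z = 0) : volume {x ∈ Icc 0 L | a x < (π / L) ^ 2} = 0 := by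
  obtain ⟨z, hz, huz⟩ := hzero
  obtain ⟨hzl, hleft⟩ := half_le_of_apply_eq_zero hL hale hu heq hu0 h0 hz huz
  obtain ⟨hzr, hright⟩ := half_le_of_apply_eq_zero (a := fun x ↦ a (L - x))
    (u := fun x ↦ u (L - x)) hL
    (fun x hx ↦ hale _ (sub_mem_Icc_zero_iff_right.2 hx))
    (hu.comp (contDiff_const.sub contDiff_id))
    (comp_const_sub_of_deriv_deriv_add_mul_eq_zero heq) (by simp [deriv_comp_const_sub, huL])
    (by simpa using hL0) (sub_mem_Icc_zero_iff_right.2 hz) (by simpa using huz)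
  have hal := hleft (by linarith)
  have har := hright (by linarith)
  refine measure_mono_null (fun x ⟨hx, hlt⟩ ↦ ?_)
    ((toFinite {0, L / 2, L}).countable.measure_zero _)
  rcases lt_trichotomy x (L / 2) with hxl | rfl | hxr
  · obtain rfl | hx0 := hx.1.eq_or_lt
    · exact mem_insert _ _
    · exact absurd (hal x ⟨hx0, hxl⟩) hlt.ne
  · simp
  · obtain rfl | hxL := hx.2.eq_or_lt
    · simp
    · have := har (L - x) ⟨by linarith, by linarith⟩
      simp only [sub_sub_cancel] at this
      exact absurd this hlt.ne

end

theorem Linfty_lyapunov_uniqueness (L : ℝ) (hL : 0 < L) (a u : ℝ → ℝ)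
    (ha : ContinuousOn a (Icc 0 L))
    (hane : ∃ x ∈ Icc 0 L, a x ≠ 0)
    (hamean : 0 ≤ ∫ x in (0:ℝ)..L, a x)
    (hale : ∀ x ∈ Icc 0 L, a x ≤ π ^ 2 / L ^ 2)
    (halt : 0 < volume {x ∈ Icc 0 L | a x < π ^ 2 / L ^ 2})
    (hu : ContDiff ℝ 2 u)
    (heq : ∀ x ∈ Icc 0 L, deriv (deriv u) x + a x * u x = 0)
    (hu0 : deriv u 0 = 0) (huL : deriv u L = 0) :
    ∀ x ∈ Icc 0 L, u x = 0 := by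
  rw [← div_pow] at hale halt
  by_cases hzero : ∃ z ∈ Icc 0 L, u z = 0
  · by_cases h0 : u 0 = 0
    · exact eq_zero_of_apply_eq_zero_of_deriv_eq_zero ha hu heq h0 hu0
    by_cases hL0 : u L = 0
    · exact eq_zero_of_apply_eq_zero_of_deriv_eq_zero_right ha hu heq hL0 huL
    exact (halt.ne' <|
      volume_setOf_lt_eq_zero_of_exists_zero hL hale hu heq hu0 huL h0 hL0 hzero).elim
  · push Not at hzero
    obtain ⟨x, hx, hax⟩ := hane
    exact (hax <| eq_zero_of_solution_forall_ne_zero hL ha hamean hu heq hu0 huL hzero x hx).elim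
end

section
/- Let A : [0,L] → Sym(n,ℝ) be continuous with ∫₀ᴸ ⟨A(x)k,k⟩ dx ≥ 0 for all k ∈ ℝⁿ, and with no nontrivial constant solution of u'' + A u = 0, u'(0)=u'(L)=0. Let ρ(x) denote the spectral radius of A(x) and suppose ∫₀ᴸ ρ(x)⁺ dx ≤ 4/L. Then the Neumann system u'' + A(x)u = 0, u'(0)=u'(L)=0 has only the trivial C² solution. -/
/-!
Write `σ = ρ⁺`, which for symmetric `A(x)` is the operator norm `‖A(x)‖`, so `⟨A v, v⟩ ≤ σ |v|²`.
Testing the equation against `u` and against a constant `k`, the Neumann conditions give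
`∫ ⟨A u, u⟩ = ∫ |u'|²` and `∫ A u = 0`; together with `∫ ⟨A k, k⟩ ≥ 0` this yields
`E := ∫ |u'|² ≤ ∫ σ |u - k|²` for every `k`. Put `Γ = ∫ σ` and `m(t) = ∫₀ᵗ σ`, and recall
`|u(y) - u(x)|² ≤ (y - x) E`. If `Γ = 0`, the choice `k = u(0)` gives `E ≤ L Γ E = 0`. Otherwise
take for `k` the `σ`-weighted mean of `u`; Lagrange's identity then gives
`Γ E ≤ ∫∫_{x<y} σ(x) σ(y) |u(y) - u(x)|² ≤ E ∫ m (Γ - m) < E L Γ² / 4 ≤ Γ E` unless `E = 0`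
(the strict step because `m(0) = 0`). So `u` is a constant `k` with `A(x) k = 0`, hence `u = 0`.
-/

open Set Matrix intervalIntegral
open MeasureTheory (volume)
open scoped RealInnerProductSpace

theorem integral_mul_sub_eq_integral_integral {f : ℝ → ℝ} (hf : Continuous f) (a b : ℝ) :
    ∫ x in a..b, f x * (b - x) = ∫ t in a..b, ∫ x in a..t, f x := by
  have hparts := integral_mul_deriv_eq_deriv_mul (a := a) (b := b)
    (fun x _ => (hasDerivAt_id' x).const_sub b)
    (fun x _ => (hf.integral_hasStrictDerivAt a x).hasDerivAt)
    intervalIntegrable_const (hf.intervalIntegrable a b)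
  simpa [mul_comm] using hparts

theorem integral_mul_integral_mul_sub {f : ℝ → ℝ} (hf : Continuous f) (a b : ℝ) :
    ∫ y in a..b, f y * ∫ x in a..y, f x * (y - x)
      = ∫ t in a..b, (∫ x in a..t, f x) * ((∫ x in a..b, f x) - ∫ x in a..t, f x) := by
  set F := fun t => ∫ x in a..t, f x
  have hFc : Continuous F := by fun_prop
  have hparts := integral_mul_deriv_eq_deriv_mul (a := a) (b := b)
    (fun x _ => (hFc.integral_hasStrictDerivAt a x).hasDerivAt)
    (fun x _ => (hf.integral_hasStrictDerivAt a x).hasDerivAt)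
    (hFc.intervalIntegrable a b) (hf.intervalIntegrable a b)
  calc ∫ y in a..b, f y * ∫ x in a..y, f x * (y - x)
      = ∫ y in a..b, (∫ t in a..y, F t) * f y := by
        simp_rw [integral_mul_sub_eq_integral_integral hf, mul_comm (f _)]
        rfl
    _ = (∫ t in a..b, F t) * F b - ∫ t in a..b, F t * F t := by
        rw [hparts]
        simp only [integral_same, mul_zero, sub_zero]
        rfl
    _ = ∫ t in a..b, F t * (F b - F t) := by
        simp_rw [mul_sub]
        rw [integral_sub ((by fun_prop : Continuous fun t => F t * F b).intervalIntegrable a b)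
          ((by fun_prop : Continuous fun t => F t * F t).intervalIntegrable a b),
          integral_mul_const]

theorem integral_mul_sub_lt {f : ℝ → ℝ} {a b : ℝ} (hab : a < b) (hf : Continuous f)
    (hfa : f a = 0) {c : ℝ} (hc : c ≠ 0) :
    ∫ t in a..b, f t * (c - f t) < (b - a) * c ^ 2 / 4 := by
  have hlt := integral_lt_integral_of_continuousOn_of_le_of_exists_lt hab
    (f := fun t => f t * (c - f t)) (g := fun _ => c ^ 2 / 4) (by fun_prop) continuousOn_const
    (fun t _ => by nlinarith [sq_nonneg (c - 2 * f t)])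
    ⟨a, left_mem_Icc.2 hab.le, by simp only [hfa, zero_mul]; positivity⟩
  simpa [mul_div_assoc] using hlt

section InnerProductSpace

variable {H : Type*} [NormedAddCommGroup H] [InnerProductSpace ℝ H]

theorem norm_sub_sq_le_mul_integral_norm_sq {u u' : ℝ → H} (hu : ∀ t, HasDerivAt u (u' t) t)
    (hu' : Continuous u') {x y : ℝ} (hxy : x ≤ y) :
    ‖u y - u x‖ ^ 2 ≤ (y - x) * ∫ t in x..y, ‖u' t‖ ^ 2 := by
  rcases hxy.eq_or_lt with rfl | hxy
  · simp
  set d := u y - u x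
  set c := y - x
  have hc : 0 < c := sub_pos.2 hxy
  have hd : ∫ t in x..y, ⟪d, u' t⟫ = ‖d‖ ^ 2 := by
    have hdu : ∀ t, HasDerivAt (fun t => ⟪d, u t⟫) ⟪d, u' t⟫ t := fun t => by
      simpa using (hasDerivAt_const t d).inner ℝ (hu t)
    rw [integral_eq_sub_of_hasDerivAt (fun t _ => hdu t)
      ((continuous_const.inner hu').intervalIntegrable x y), ← inner_sub_right,
      real_inner_self_eq_norm_sq]
  have hpt : ∀ t, 2 * c * ⟪d, u' t⟫ ≤ ‖d‖ ^ 2 + c ^ 2 * ‖u' t‖ ^ 2 := fun t => by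
    nlinarith [real_inner_le_norm d (u' t), sq_nonneg (‖d‖ - c * ‖u' t‖)]
  have hint := integral_mono_on (μ := volume) hxy.le
    ((by fun_prop : Continuous fun t => 2 * c * ⟪d, u' t⟫).intervalIntegrable x y)
    ((by fun_prop : Continuous fun t => ‖d‖ ^ 2 + c ^ 2 * ‖u' t‖ ^ 2).intervalIntegrable x y)
    (fun t _ => hpt t)
  rw [integral_const_mul, hd, integral_add intervalIntegrable_const
    ((by fun_prop : Continuous fun t => c ^ 2 * ‖u' t‖ ^ 2).intervalIntegrable x y),
    integral_const, integral_const_mul, smul_eq_mul] at hint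
  nlinarith

theorem norm_sub_sq_le_mul_integral_norm_sq_of_le {u u' : ℝ → H}
    (hu : ∀ t, HasDerivAt u (u' t) t) (hu' : Continuous u') {a b x y : ℝ} (hax : a ≤ x)
    (hxy : x ≤ y) (hyb : y ≤ b) :
    ‖u y - u x‖ ^ 2 ≤ (y - x) * ∫ t in a..b, ‖u' t‖ ^ 2 := by
  refine (norm_sub_sq_le_mul_integral_norm_sq hu hu' hxy).trans
    (mul_le_mul_of_nonneg_left ?_ (sub_nonneg.2 hxy))
  exact integral_mono_interval hax hxy hyb (.of_forall fun _ => by positivity)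
    ((by fun_prop : Continuous _).intervalIntegrable a b)

theorem integral_norm_sq_deriv_le_integral_inner_sub {a b : ℝ} (hab : a ≤ b)
    {T : ℝ → H →L[ℝ] H} (hT : ContinuousOn T (Icc a b))
    (hsymm : ∀ x ∈ Icc a b, (T x : H →ₗ[ℝ] H).IsSymmetric)
    (hmean : ∀ k, 0 ≤ ∫ x in a..b, ⟪T x k, k⟫)
    {u u' u'' : ℝ → H} (hu : ∀ t, HasDerivAt u (u' t) t) (hu' : ∀ t, HasDerivAt u' (u'' t) t)
    (hu'' : Continuous u'') (heq : ∀ x ∈ Icc a b, u'' x + T x (u x) = 0)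
    (ha : u' a = 0) (hb : u' b = 0) (k : H) :
    ∫ x in a..b, ‖u' x‖ ^ 2 ≤ ∫ x in a..b, ⟪T x (u x - k), u x - k⟫ := by
  have huc : Continuous u := continuous_iff_continuousAt.2 fun t => (hu t).continuousAt
  have hu'c : Continuous u' := continuous_iff_continuousAt.2 fun t => (hu' t).continuousAt
  have henergy : ∫ x in a..b, (⟪u'' x, u x⟫ + ‖u' x‖ ^ 2) = 0 := by
    have hderiv : ∀ t, HasDerivAt (fun t => ⟪u' t, u t⟫) (⟪u'' t, u t⟫ + ‖u' t‖ ^ 2) t :=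
      fun t => ((hu' t).inner ℝ (hu t)).congr_deriv (by rw [real_inner_self_eq_norm_sq, add_comm])
    rw [integral_eq_sub_of_hasDerivAt (fun t _ => hderiv t)
      ((by fun_prop : Continuous _).intervalIntegrable a b), ha, hb]
    simp
  have hflux : ∫ x in a..b, ⟪u'' x, k⟫ = 0 := by
    have hderiv : ∀ t, HasDerivAt (fun t => ⟪u' t, k⟫) ⟪u'' t, k⟫ t :=
      fun t => by simpa using (hu' t).inner ℝ (hasDerivAt_const t k)
    rw [integral_eq_sub_of_hasDerivAt (fun t _ => hderiv t)
      ((by fun_prop : Continuous _).intervalIntegrable a b), ha, hb]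
    simp
  have hpt : ∀ x ∈ uIcc a b, ⟪T x (u x - k), u x - k⟫
      = ‖u' x‖ ^ 2 - (⟪u'' x, u x⟫ + ‖u' x‖ ^ 2) + 2 * ⟪u'' x, k⟫ + ⟪T x k, k⟫ := by
    intro x hx
    rw [uIcc_of_le hab] at hx
    have hTu : T x (u x) = -u'' x := eq_neg_of_add_eq_zero_right (heq x hx)
    have hsymm' : ⟪T x k, u x⟫ = ⟪T x (u x), k⟫ := by
      rw [real_inner_comm]; exact (hsymm x hx (u x) k).symm
    rw [map_sub, inner_sub_left, inner_sub_right, inner_sub_right, hsymm', hTu,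
      inner_neg_left, inner_neg_left]
    ring
  have hTkk : ContinuousOn (fun x => ⟪T x k, k⟫) (Icc a b) := by fun_prop
  rw [integral_congr hpt, integral_add ((by fun_prop : Continuous _).intervalIntegrable a b)
      (hTkk.intervalIntegrable_of_Icc hab),
    integral_add ((by fun_prop : Continuous _).intervalIntegrable a b)
      ((by fun_prop : Continuous _).intervalIntegrable a b),
    integral_sub ((by fun_prop : Continuous _).intervalIntegrable a b)
      ((by fun_prop : Continuous _).intervalIntegrable a b),
    integral_const_mul, henergy, hflux]
  linarith [hmean k]

variable [CompleteSpace H]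

theorem integral_mul_norm_sub_sq {σ : ℝ → ℝ} (hσ : Continuous σ) {u : ℝ → H} (hu : Continuous u)
    (a b : ℝ) (k : H) :
    ∫ x in a..b, σ x * ‖u x - k‖ ^ 2 = (∫ x in a..b, σ x * ‖u x‖ ^ 2)
      - 2 * ⟪∫ x in a..b, σ x • u x, k⟫ + (∫ x in a..b, σ x) * ‖k‖ ^ 2 := by
  have hpt : ∀ x, σ x * ‖u x - k‖ ^ 2
      = σ x * ‖u x‖ ^ 2 - 2 * ⟪σ x • u x, k⟫ + σ x * ‖k‖ ^ 2 := fun x => by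
    rw [norm_sub_sq_real, real_inner_smul_left]; ring
  have hinner : ∫ x in a..b, ⟪σ x • u x, k⟫ = ⟪∫ x in a..b, σ x • u x, k⟫ := by
    simp_rw [real_inner_comm k]
    exact (innerSL ℝ k).intervalIntegral_comp_comm ((hσ.smul hu).intervalIntegrable a b)
  simp_rw [hpt]
  rw [integral_add ((by fun_prop : Continuous _).intervalIntegrable a b)
      ((by fun_prop : Continuous _).intervalIntegrable a b),
    integral_sub ((by fun_prop : Continuous _).intervalIntegrable a b)
      ((by fun_prop : Continuous _).intervalIntegrable a b),
    integral_const_mul, hinner, integral_mul_const]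

theorem integral_mul_integral_mul_norm_sub_sq {σ : ℝ → ℝ} (hσ : Continuous σ) {u : ℝ → H}
    (hu : Continuous u) (a b : ℝ) :
    ∫ y in a..b, σ y * ∫ x in a..y, σ x * ‖u y - u x‖ ^ 2
      = (∫ x in a..b, σ x) * (∫ x in a..b, σ x * ‖u x‖ ^ 2) - ‖∫ x in a..b, σ x • u x‖ ^ 2 := by
  set m := fun t => ∫ x in a..t, σ x
  set S := fun t => ∫ x in a..t, σ x * ‖u x‖ ^ 2
  set W := fun t => ∫ x in a..t, σ x • u x
  have hσu : Continuous fun x => σ x * ‖u x‖ ^ 2 := by fun_prop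
  have hσu' : Continuous fun x => σ x • u x := by fun_prop
  have hderiv : ∀ y, HasDerivAt (fun t => m t * S t - ‖W t‖ ^ 2)
      (σ y * (S y - 2 * ⟪W y, u y⟫ + m y * ‖u y‖ ^ 2)) y := fun y => by
    have hm' : HasDerivAt m (σ y) y := (hσ.integral_hasStrictDerivAt a y).hasDerivAt
    have hS' : HasDerivAt S (σ y * ‖u y‖ ^ 2) y := (hσu.integral_hasStrictDerivAt a y).hasDerivAt
    have hW' : HasDerivAt W (σ y • u y) y := (hσu'.integral_hasStrictDerivAt a y).hasDerivAt
    refine ((hm'.fun_mul hS').fun_sub hW'.norm_sq).congr_deriv ?_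
    rw [real_inner_smul_right]
    ring
  have hexpand : ∀ y, σ y * ∫ x in a..y, σ x * ‖u y - u x‖ ^ 2
      = σ y * (S y - 2 * ⟪W y, u y⟫ + m y * ‖u y‖ ^ 2) := fun y => by
    simp_rw [norm_sub_rev (u y)]
    rw [integral_mul_norm_sub_sq hσ hu]
  simp_rw [hexpand]
  rw [integral_eq_sub_of_hasDerivAt (fun y _ => hderiv y)
    ((by fun_prop : Continuous _).intervalIntegrable a b)]
  simp [m, S, W]

theorem mul_integral_mul_norm_sub_mean_sq_le {a b : ℝ} (hab : a ≤ b) {σ : ℝ → ℝ}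
    (hσ : Continuous σ) (hσ0 : ∀ x ∈ Icc a b, 0 ≤ σ x) (hΓ : ∫ x in a..b, σ x ≠ 0)
    {u u' : ℝ → H} (hu : ∀ t, HasDerivAt u (u' t) t) (hu' : Continuous u') :
    (∫ x in a..b, σ x) * ∫ x in a..b,
        σ x * ‖u x - (∫ x in a..b, σ x)⁻¹ • ∫ x in a..b, σ x • u x‖ ^ 2
      ≤ (∫ x in a..b, ‖u' x‖ ^ 2) *
        ∫ t in a..b, (∫ x in a..t, σ x) * ((∫ x in a..b, σ x) - ∫ x in a..t, σ x) := by
  set E := ∫ x in a..b, ‖u' x‖ ^ 2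
  set Γ := ∫ x in a..b, σ x
  set w := ∫ x in a..b, σ x • u x
  have huc : Continuous u := continuous_iff_continuousAt.2 fun t => (hu t).continuousAt
  calc Γ * ∫ x in a..b, σ x * ‖u x - Γ⁻¹ • w‖ ^ 2
      = Γ * (∫ x in a..b, σ x * ‖u x‖ ^ 2) - ‖w‖ ^ 2 := by
        rw [integral_mul_norm_sub_sq hσ huc, inner_smul_right, real_inner_self_eq_norm_sq,
          norm_smul, mul_pow, Real.norm_eq_abs, sq_abs]
        field_simp
        ring
    _ = ∫ y in a..b, σ y * ∫ x in a..y, σ x * ‖u y - u x‖ ^ 2 :=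
        (integral_mul_integral_mul_norm_sub_sq hσ huc a b).symm
    _ ≤ ∫ y in a..b, σ y * ∫ x in a..y, σ x * (y - x) * E := by
        refine integral_mono_on hab ((by fun_prop : Continuous _).intervalIntegrable a b)
          ((by fun_prop : Continuous _).intervalIntegrable a b)
          fun y hy => mul_le_mul_of_nonneg_left ?_ (hσ0 y hy)
        refine integral_mono_on hy.1 ((by fun_prop : Continuous _).intervalIntegrable a y)
          ((by fun_prop : Continuous _).intervalIntegrable a y) fun x hx => ?_
        rw [mul_assoc]
        exact mul_le_mul_of_nonneg_left
          (norm_sub_sq_le_mul_integral_norm_sq_of_le hu hu' hx.1 hx.2 hy.2)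
          (hσ0 x ⟨hx.1, hx.2.trans hy.2⟩)
    _ = E * ∫ t in a..b, (∫ x in a..t, σ x) * (Γ - ∫ x in a..t, σ x) := by
        simp_rw [integral_mul_const, ← mul_assoc]
        rw [integral_mul_const, integral_mul_integral_mul_sub hσ, mul_comm]

theorem eqOn_zero_of_integral_norm_sq_le_integral_mul_norm_sub_sq {a b : ℝ} (hab : a < b)
    {σ : ℝ → ℝ} (hσ : Continuous σ) (hσ0 : ∀ x ∈ Icc a b, 0 ≤ σ x)
    (hσL : (b - a) * ∫ x in a..b, σ x ≤ 4) {u u' : ℝ → H} (hu : ∀ t, HasDerivAt u (u' t) t)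
    (hu' : Continuous u')
    (hpoinc : ∀ k, ∫ x in a..b, ‖u' x‖ ^ 2 ≤ ∫ x in a..b, σ x * ‖u x - k‖ ^ 2) :
    ∀ x ∈ Icc a b, u' x = 0 := by
  set E := ∫ x in a..b, ‖u' x‖ ^ 2
  set Γ := ∫ x in a..b, σ x
  have hE0 : 0 ≤ E := integral_nonneg hab.le fun _ _ => by positivity
  have hE : E ≤ 0 := by
    rcases (integral_nonneg hab.le hσ0).eq_or_lt with hΓ | hΓ
    · have huc : Continuous u := continuous_iff_continuousAt.2 fun t => (hu t).continuousAt
      calc E ≤ ∫ x in a..b, σ x * ‖u x - u a‖ ^ 2 := hpoinc (u a)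
        _ ≤ ∫ x in a..b, σ x * ((b - a) * E) := by
          refine integral_mono_on hab.le ((by fun_prop : Continuous _).intervalIntegrable a b)
            ((by fun_prop : Continuous _).intervalIntegrable a b) fun x hx =>
              mul_le_mul_of_nonneg_left
                ((norm_sub_sq_le_mul_integral_norm_sq_of_le hu hu' le_rfl hx.1 hx.2).trans ?_)
                (hσ0 x hx)
          exact mul_le_mul_of_nonneg_right (by linarith [hx.2]) hE0
        _ = 0 := by rw [integral_mul_const]; exact mul_eq_zero_of_left hΓ.symm _
    · have hchain := (mul_le_mul_of_nonneg_left (hpoinc _) hΓ.le).trans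
        (mul_integral_mul_norm_sub_mean_sq_le hab.le hσ hσ0 hΓ.ne' hu hu')
      have hlt := integral_mul_sub_lt hab (f := fun t => ∫ x in a..t, σ x) (by fun_prop)
        integral_same hΓ.ne'
      have hI : ∫ t in a..b, (∫ x in a..t, σ x) * (Γ - ∫ x in a..t, σ x) < Γ := by nlinarith
      nlinarith
  intro x hx
  by_contra hne
  have hpos := integral_lt_integral_of_continuousOn_of_le_of_exists_lt hab
    (f := fun _ => 0) (g := fun x => ‖u' x‖ ^ 2) continuousOn_const (by fun_prop)
    (fun _ _ => by positivity) ⟨x, hx, pow_pos (norm_pos_iff.2 hne) 2⟩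
  simp only [integral_zero] at hpos
  linarith

theorem eqOn_zero_of_neumann_of_integral_opNorm_le {a b : ℝ} (hab : a < b)
    {T : ℝ → H →L[ℝ] H} (hT : ContinuousOn T (Icc a b))
    (hsymm : ∀ x ∈ Icc a b, (T x : H →ₗ[ℝ] H).IsSymmetric)
    (hconst : ∀ k, (∀ x ∈ Icc a b, T x k = 0) → k = 0)
    (hmean : ∀ k, 0 ≤ ∫ x in a..b, ⟪T x k, k⟫) (hnorm : (b - a) * ∫ x in a..b, ‖T x‖ ≤ 4)
    {u u' u'' : ℝ → H} (hu : ∀ t, HasDerivAt u (u' t) t) (hu' : ∀ t, HasDerivAt u' (u'' t) t)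
    (hu'' : Continuous u'') (heq : ∀ x ∈ Icc a b, u'' x + T x (u x) = 0)
    (ha : u' a = 0) (hb : u' b = 0) :
    ∀ x ∈ Icc a b, u x = 0 := by
  set σ := fun x => ‖T (projIcc a b hab.le x)‖
  have hσ : Continuous σ := (hT.comp_continuous (continuous_subtype_val.comp continuous_projIcc)
    fun x => (projIcc a b hab.le x).2).norm
  have hσT : ∀ x ∈ Icc a b, σ x = ‖T x‖ := fun x hx => by simp [σ, projIcc_of_mem hab.le hx]
  have huc : Continuous u := continuous_iff_continuousAt.2 fun t => (hu t).continuousAt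
  have hu'c : Continuous u' := continuous_iff_continuousAt.2 fun t => (hu' t).continuousAt
  have hpoinc : ∀ k, ∫ x in a..b, ‖u' x‖ ^ 2 ≤ ∫ x in a..b, σ x * ‖u x - k‖ ^ 2 := fun k => by
    refine (integral_norm_sq_deriv_le_integral_inner_sub hab.le hT hsymm hmean hu hu' hu''
      heq ha hb k).trans (integral_mono_on hab.le ?_
        ((by fun_prop : Continuous _).intervalIntegrable a b) fun x hx => ?_)
    · have hcont : ContinuousOn (fun x => u x - k) (Icc a b) := by fun_prop
      exact ((hT.clm_apply hcont).inner hcont).intervalIntegrable_of_Icc hab.le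
    · rw [hσT x hx, pow_two, ← mul_assoc]
      exact (real_inner_le_norm _ _).trans
        (mul_le_mul_of_nonneg_right ((T x).le_opNorm _) (norm_nonneg _))
  have hu'0 : ∀ x ∈ Icc a b, u' x = 0 :=
    eqOn_zero_of_integral_norm_sq_le_integral_mul_norm_sub_sq hab hσ
      (fun x _ => norm_nonneg _)
      (by rwa [integral_congr fun x hx => hσT x (uIcc_of_le hab.le ▸ hx)]) hu hu'c hpoinc
  have hconstant : ∀ x ∈ Icc a b, u x = u a :=
    constant_of_has_deriv_right_zero huc.continuousOn fun x hx => by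
      simpa [hu'0 x (Ico_subset_Icc_self hx)] using (hu x).hasDerivWithinAt
  have hu''0 : ∀ x ∈ Icc a b, u'' x = 0 := fun x hx =>
    (uniqueDiffOn_Icc hab x hx).eq_deriv _ (hu' x).hasDerivWithinAt
      ((hasDerivWithinAt_const x _ 0).congr (fun y hy => hu'0 y hy) (hu'0 x hx))
  have hua : u a = 0 := hconst _ fun x hx => by
    simpa [hu''0 x hx, hconstant x hx] using heq x hx
  intro x hx
  rw [hconstant x hx, hua]

end InnerProductSpace

open scoped Matrix.Norms.L2Operator in
theorem Matrix.IsHermitian.iSup_abs_eigenvalues_eq_norm_toEuclideanCLM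
    {𝕜 n : Type*} [RCLike 𝕜] [Fintype n] [DecidableEq n] {A : Matrix n n 𝕜}
    (hA : A.IsHermitian) :
    ⨆ i, |hA.eigenvalues i| = ‖toEuclideanCLM (n := n) (𝕜 := 𝕜) A‖ := by
  have hdiag : ‖toEuclideanCLM (n := n) (𝕜 := 𝕜) A‖
      = ‖(RCLike.ofReal ∘ hA.eigenvalues : n → 𝕜)‖ := by
    conv_lhs => rw [l2_opNorm_toEuclideanCLM, hA.spectral_theorem, Unitary.conjStarAlgAut_apply,
      ← Unitary.coe_star, CStarRing.norm_mul_coe_unitary, CStarRing.norm_coe_unitary_mul,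
      l2_opNorm_diagonal]
  rw [hdiag]
  refine le_antisymm (Real.iSup_le (fun i => ?_) (norm_nonneg _)) ?_
  · simpa using norm_le_pi_norm (RCLike.ofReal ∘ hA.eigenvalues : n → 𝕜) i
  · refine (pi_norm_le_iff_of_nonneg (Real.iSup_nonneg fun i => abs_nonneg _)).2 fun i => ?_
    simpa using le_ciSup (finite_range fun i => |hA.eigenvalues i|).bddAbove i

theorem matrix_L1_lyapunov_spectral_radius (L : ℝ) (hL : 0 < L) (n : ℕ)
    (A : ℝ → Matrix (Fin n) (Fin n) ℝ)
    (hA : ContinuousOn A (Icc 0 L))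
    (hsymm : ∀ x, (A x).IsHermitian)
    (hconst : ∀ k : Fin n → ℝ, (∀ x ∈ Icc 0 L, A x *ᵥ k = 0) → k = 0)
    (hmean : ∀ k : Fin n → ℝ, 0 ≤ ∫ x in (0:ℝ)..L, (A x *ᵥ k) ⬝ᵥ k)
    (ρ : ℝ → ℝ) (hρ : ∀ x, ρ x = ⨆ i : Fin n, |(hsymm x).eigenvalues i|)
    (hρ1 : (∫ x in (0:ℝ)..L, max (ρ x) 0) ≤ 4 / L)
    (u : ℝ → Fin n → ℝ) (hu : ContDiff ℝ 2 u)
    (heq : ∀ x ∈ Icc 0 L, deriv (deriv u) x + A x *ᵥ u x = 0)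
    (hu0 : deriv u 0 = 0) (huL : deriv u L = 0) :
    ∀ x ∈ Icc 0 L, u x = 0 := by
  set T := fun x => toEuclideanCLM (𝕜 := ℝ) (n := Fin n) (A x)
  set e := (EuclideanSpace.equiv (Fin n) ℝ).symm
  obtain ⟨hud, -, hu'⟩ := contDiff_succ_iff_deriv.mp (show ContDiff ℝ (1 + 1) u from hu)
  have hinner : ∀ x k, ⟪T x k, k⟫ = (A x *ᵥ k.ofLp) ⬝ᵥ k.ofLp := fun x k => by
    rw [real_inner_comm, inner_toEuclideanCLM, dotProduct_comm]
  have hρT : ∀ x, max (ρ x) 0 = ‖T x‖ := fun x => by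
    rw [hρ, (hsymm x).iSup_abs_eigenvalues_eq_norm_toEuclideanCLM, max_eq_left (norm_nonneg _)]
  have hT : ContinuousOn T (Icc 0 L) :=
    ((toEuclideanCLM (𝕜 := ℝ) (n := Fin n)).toAlgEquiv.toLinearMap.continuous_of_finiteDimensional
      ).comp_continuousOn hA
  have key := eqOn_zero_of_neumann_of_integral_opNorm_le hL hT
    (fun x _ => isSymmetric_toEuclideanLin_iff.2 (hsymm x))
    (fun k hk => by
      simpa using hconst k.ofLp fun x hx => by simpa [T] using congrArg WithLp.ofLp (hk x hx))
    (fun k => by simpa only [hinner] using hmean k.ofLp)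
    (by rw [sub_zero, ← integral_congr fun x _ => hρT x, mul_comm, ← le_div_iff₀ hL]; exact hρ1)
    (u := e ∘ u) (u' := e ∘ deriv u) (u'' := e ∘ deriv (deriv u))
    (fun t => e.hasFDerivAt.comp_hasDerivAt t (hud t).hasDerivAt)
    (fun t => e.hasFDerivAt.comp_hasDerivAt t ((hu'.differentiable one_ne_zero) t).hasDerivAt)
    (e.continuous.comp (hu'.continuous_deriv le_rfl))
    (fun x hx => by simpa [T, e] using congrArg e (heq x hx))
    (by simp [hu0]) (by simp [huL])
  exact fun x hx => by simpa [e] using key x hx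
end

section
/- Let a₁₁, a₁₂, a₂₂ : Ω̄ → ℝ be continuous with a₁₁ ≥ 0, a₂₂ ≥ 0, a₁₁a₂₂ ≥ a₁₂² pointwise. Fix constants β₁, β₂ > 0 and p₁, p₂ ∈ [1,∞], and suppose ‖a₁₁‖_{p₁} < β₁ and ‖a₂₂ + a₁₂²/(β₁ − ‖a₁₁‖_{p₁})‖_{p₂} < β₂. Then there exists γ > 0 with γ < β₁ − ‖a₁₁‖_{p₁} and (1/γ − 1/(β₁ − ‖a₁₁‖_{p₁}))·‖a₁₂²‖_{p₂} < β₂ − ‖a₂₂ + a₁₂²/(β₁ − ‖a₁₁‖_{p₁})‖_{p₂}, and for this γ the diagonal matrix B(x) = diag(a₁₁(x)+γ, a₂₂(x)+a₁₂(x)²/γ) satisfies A(x) ≤ B(x) for all x, where A(x) = [[a₁₁(x),a₁₂(x)],[a₁₂(x),a₂₂(x)]]. -/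
open Set Matrix MeasureTheory ENNReal Filter Topology

/-! The matrix inequality holds for every `γ > 0`: `B - A = [[γ, -a₁₂], [-a₁₂, a₁₂²/γ]]` has
nonnegative diagonal and vanishing determinant. The choice of `γ` is then a limit argument:
`(1/γ - 1/δ) m → 0` as `γ → δ⁻`, where `δ = β₁ - ‖a₁₁‖_{p₁}`. -/

theorem quadratic_form_nonneg {a b c : ℝ} (ha : 0 ≤ a) (hc : 0 ≤ c) (hb : b ^ 2 ≤ a * c)
    (x y : ℝ) : 0 ≤ a * x ^ 2 + 2 * b * x * y + c * y ^ 2 := by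
  rcases ha.eq_or_lt with rfl | ha
  · obtain rfl : b = 0 := by nlinarith
    simpa using mul_nonneg hc (sq_nonneg y)
  · have hsq : a * (a * x ^ 2 + 2 * b * x * y + c * y ^ 2)
        = (a * x + b * y) ^ 2 + (a * c - b ^ 2) * y ^ 2 := by ring
    have hmul : 0 ≤ a * (a * x ^ 2 + 2 * b * x * y + c * y ^ 2) := by
      rw [hsq]
      nlinarith [sq_nonneg (a * x + b * y), sq_nonneg y]
    exact nonneg_of_mul_nonneg_right (by linarith) ha

theorem Matrix.posSemidef_fin_two {a b c : ℝ} (ha : 0 ≤ a) (hc : 0 ≤ c) (hb : b ^ 2 ≤ a * c) :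
    !![a, b; b, c].PosSemidef := by
  refine .of_dotProduct_mulVec_nonneg ?_ fun v ↦ ?_
  · ext i j
    fin_cases i <;> fin_cases j <;> rfl
  · have hq : star v ⬝ᵥ (!![a, b; b, c] *ᵥ v) = a * v 0 ^ 2 + 2 * b * v 0 * v 1 + c * v 1 ^ 2 := by
      simp [mulVec, dotProduct, Fin.sum_univ_two]
      ring
    exact hq ▸ quadratic_form_nonneg ha hc hb _ _

theorem Matrix.posSemidef_diagonal_add_sub {x y b γ : ℝ} (hγ : 0 < γ) :
    (diagonal ![x + γ, y + b ^ 2 / γ] - !![x, b; b, y]).PosSemidef := by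
  have hdiff : diagonal ![x + γ, y + b ^ 2 / γ] - !![x, b; b, y] = !![γ, -b; -b, b ^ 2 / γ] := by
    ext i j
    fin_cases i <;> fin_cases j <;> simp
  rw [hdiff]
  refine posSemidef_fin_two hγ.le (by positivity) ?_
  rw [neg_sq, mul_div_cancel₀ _ hγ.ne']

theorem exists_mem_Ioo_one_div_sub_one_div_mul_lt {δ ε : ℝ} (hδ : 0 < δ) (hε : 0 < ε) (m : ℝ) :
    ∃ γ ∈ Ioo 0 δ, (1 / γ - 1 / δ) * m < ε := by
  have hlim : Tendsto (fun γ ↦ (1 / γ - 1 / δ) * m) (𝓝[<] δ) (𝓝 0) := by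
    have hcont : ContinuousAt (fun γ : ℝ ↦ (1 / γ - 1 / δ) * m) δ := by
      fun_prop (disch := exact hδ.ne')
    simpa using hcont.tendsto.mono_left nhdsWithin_le_nhds
  have hIoo : ∀ᶠ γ in 𝓝[<] δ, γ ∈ Ioo 0 δ := Ioo_mem_nhdsLT hδ
  exact (hIoo.and (hlim.eventually (gt_mem_nhds hε))).exists

theorem exists_gamma_diag_bound_general (N : ℕ) (Ω : Set (EuclideanSpace ℝ (Fin N)))
    (a11 a12 a22 : EuclideanSpace ℝ (Fin N) → ℝ)
    (β₁ β₂ : ℝ)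
    (n1 : ℝ) (n2 : ℝ) (m : ℝ)
    (hN1 : n1 < β₁) (hN2 : n2 < β₂) :
    ∃ γ : ℝ, 0 < γ ∧ γ < β₁ - n1 ∧
      (1 / γ - 1 / (β₁ - n1)) * m < β₂ - n2 ∧
      ∀ x ∈ Ω,
        (Matrix.diagonal ![a11 x + γ, a22 x + a12 x ^ 2 / γ] -
          !![a11 x, a12 x; a12 x, a22 x]).PosSemidef := by
  obtain ⟨γ, ⟨hγ, hγδ⟩, hγm⟩ :=
    exists_mem_Ioo_one_div_sub_one_div_mul_lt (sub_pos.2 hN1) (sub_pos.2 hN2) m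
  exact ⟨γ, hγ, hγδ, hγm, fun x _ ↦ posSemidef_diagonal_add_sub hγ⟩

theorem exists_gamma_diag_bound (N : ℕ) (Ω : Set (EuclideanSpace ℝ (Fin N)))
    (hΩ : IsCompact Ω)
    (a11 a12 a22 : EuclideanSpace ℝ (Fin N) → ℝ)
    (h11c : ContinuousOn a11 Ω) (h12c : ContinuousOn a12 Ω) (h22c : ContinuousOn a22 Ω)
    (h11 : ∀ x ∈ Ω, 0 ≤ a11 x) (h22 : ∀ x ∈ Ω, 0 ≤ a22 x)
    (hdet : ∀ x ∈ Ω, a12 x ^ 2 ≤ a11 x * a22 x)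
    (β₁ β₂ : ℝ) (hβ₁ : 0 < β₁) (hβ₂ : 0 < β₂)
    (p₁ p₂ : ℝ≥0∞) (hp₁ : 1 ≤ p₁) (hp₂ : 1 ≤ p₂)
    (n1 : ℝ) (hn1 : eLpNorm a11 p₁ (volume.restrict Ω) = ENNReal.ofReal n1) (hn1' : 0 ≤ n1)
    (n2 : ℝ)
    (hn2 : eLpNorm (fun x => a22 x + a12 x ^ 2 / (β₁ - n1)) p₂ (volume.restrict Ω)
        = ENNReal.ofReal n2) (hn2' : 0 ≤ n2)
    (m : ℝ) (hm : eLpNorm (fun x => a12 x ^ 2) p₂ (volume.restrict Ω) = ENNReal.ofReal m)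
    (hm' : 0 ≤ m)
    (hN1 : n1 < β₁) (hN2 : n2 < β₂) :
    ∃ γ : ℝ, 0 < γ ∧ γ < β₁ - n1 ∧
      (1 / γ - 1 / (β₁ - n1)) * m < β₂ - n2 ∧
      ∀ x ∈ Ω,
        (Matrix.diagonal ![a11 x + γ, a22 x + a12 x ^ 2 / γ] -
          !![a11 x, a12 x; a12 x, a22 x]).PosSemidef :=
  exists_gamma_diag_bound_general N Ω a11 a12 a22 β₁ β₂ n1 n2 m hN1 hN2
end
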